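/- Let A, A' ⊆ ℝ² be nonempty bounded open sets with equal mass |A| = |A'|, equal momentum M(A) = M(A'), and equal angular momentum i(A) = i(A'). Then Q(A; B_r(x₀)) = Q(A'; B_r(x₀)) for every x₀ ∈ ℝ² and every r > 0. -/

import Mathlib

open MeasureTheory Metric

/-- The plane `ℝ²`. -/
abbrev Plane := EuclideanSpace ℝ (Fin 2)

/-- The mass `|A|` of a set: its two-dimensional Lebesgue measure. -/
noncomputable def mass (A : Set Plane) : ℝ := (volume A).toReal

/-- The momentum `M(A) = ∫_A x dx`. -/
noncomputable def mom (A : Set Plane) : Plane := ∫ x in A, x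

/-- The angular momentum `i(A) = ∫_A |x|² dx`. -/
noncomputable def angMom (A : Set Plane) : ℝ := ∫ x in A, ‖x‖ ^ 2

/-- `Q(A; B_r(x₀)) = ∫_{A △ B_r(x₀)} | |x − x₀|² − r² | dx`. -/
noncomputable def Qfun (A : Set Plane) (x₀ : Plane) (r : ℝ) : ℝ :=
  ∫ x in symmDiff A (ball x₀ r), |‖x - x₀‖ ^ 2 - r ^ 2|

/-!
The weight `g(x) = |x - x₀|² - r²` is nonnegative off `B = B_r(x₀)` and nonpositive on it, so
`|g| 𝟙_{A △ B} = g 𝟙_A - g 𝟙_B` and `Q(A; B) = ∫_A g - ∫_B g`. Expanding the square,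
`∫_A g = i(A) - 2 ⟪M(A), x₀⟫ + |A| (|x₀|² - r²)` depends on `A` only through its mass, momentum and
angular momentum.
-/

theorem Continuous.integrableOn_of_isBounded {X E : Type*} [MetricSpace X] [ProperSpace X]
    [MeasurableSpace X] [OpensMeasurableSpace X] [NormedAddCommGroup E] {μ : Measure X}
    [IsFiniteMeasureOnCompacts μ] {f : X → E} (hf : Continuous f) {s : Set X}
    (hs : Bornology.IsBounded s) : IntegrableOn f s μ :=
  (hf.continuousOn.integrableOn_compact hs.isCompact_closure).mono_set subset_closure

theorem setIntegral_symmDiff_abs_eq_sub {α : Type*} [MeasurableSpace α] {μ : Measure α}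
    {f : α → ℝ} {s t : Set α} (hs : MeasurableSet s) (ht : MeasurableSet t)
    (hfs : IntegrableOn f s μ) (hft : IntegrableOn f t μ) (hf_nonneg : ∀ x ∉ t, 0 ≤ f x)
    (hf_nonpos : ∀ x ∈ t, f x ≤ 0) :
    ∫ x in symmDiff s t, |f x| ∂μ = ∫ x in s, f x ∂μ - ∫ x in t, f x ∂μ := by
  have hindicator : (symmDiff s t).indicator (fun x => |f x|) = s.indicator f - t.indicator f := by
    ext x
    by_cases hxs : x ∈ s <;> by_cases hxt : x ∈ t <;>
      simp [Set.mem_symmDiff, hxs, hxt, abs_of_nonneg, abs_of_nonpos, hf_nonneg, hf_nonpos]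
  rw [← integral_indicator (hs.symmDiff ht), hindicator, Pi.sub_def,
    integral_sub (hfs.integrable_indicator hs) (hft.integrable_indicator ht),
    integral_indicator hs, integral_indicator ht]

theorem Qfun_eq_setIntegral_sub {A : Set Plane} (hA : MeasurableSet A)
    (hAb : Bornology.IsBounded A) (x₀ : Plane) {r : ℝ} (hr : 0 ≤ r) :
    Qfun A x₀ r = (∫ x in A, (‖x - x₀‖ ^ 2 - r ^ 2)) -
      ∫ x in ball x₀ r, (‖x - x₀‖ ^ 2 - r ^ 2) := by
  have hg : Continuous fun x : Plane => ‖x - x₀‖ ^ 2 - r ^ 2 := by fun_prop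
  refine setIntegral_symmDiff_abs_eq_sub hA measurableSet_ball
    (hg.integrableOn_of_isBounded hAb) (hg.integrableOn_of_isBounded isBounded_ball)
    (fun x hx => ?_) (fun x hx => ?_)
  · rw [mem_ball, dist_eq_norm, not_lt] at hx
    nlinarith
  · rw [mem_ball, dist_eq_norm] at hx
    nlinarith [norm_nonneg (x - x₀)]

theorem setIntegral_norm_sub_sq_sub {A : Set Plane} (hAb : Bornology.IsBounded A)
    (x₀ : Plane) (c : ℝ) :
    ∫ x in A, (‖x - x₀‖ ^ 2 - c) =
      angMom A - 2 * inner ℝ x₀ (mom A) + mass A * (‖x₀‖ ^ 2 - c) := by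
  have hsq : IntegrableOn (fun x : Plane => ‖x‖ ^ 2) A :=
    (continuous_norm.pow 2).integrableOn_of_isBounded hAb
  have hinner : IntegrableOn (fun x : Plane => 2 * inner ℝ x₀ x) A :=
    ((continuous_const.inner continuous_id).const_mul 2).integrableOn_of_isBounded hAb
  have hid : IntegrableOn (fun x : Plane => x) A := continuous_id.integrableOn_of_isBounded hAb
  have hexpand : ∀ x : Plane, ‖x - x₀‖ ^ 2 - c = (‖x‖ ^ 2 - 2 * inner ℝ x₀ x) + (‖x₀‖ ^ 2 - c) :=
    fun x => by rw [norm_sub_sq_real, real_inner_comm]; ring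
  simp_rw [hexpand]
  have hdiff : IntegrableOn (fun x : Plane => ‖x‖ ^ 2 - 2 * inner ℝ x₀ x) A := hsq.sub hinner
  rw [integral_add hdiff (integrableOn_const hAb.measure_lt_top.ne),
    integral_sub hsq hinner, integral_const_mul, setIntegral_const, integral_inner hid]
  simp [angMom, mom, mass, smul_eq_mul, Measure.real]

theorem stmt11_general (A A' : Set Plane) (hA : IsOpen A) (hAb : Bornology.IsBounded A)
    (hA' : IsOpen A') (hA'b : Bornology.IsBounded A')
    (hmass : mass A = mass A') (hmom : mom A = mom A')
    (hang : angMom A = angMom A') :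
    ∀ (x₀ : Plane) (r : ℝ), 0 < r → Qfun A x₀ r = Qfun A' x₀ r := by
  intro x₀ r hr
  rw [Qfun_eq_setIntegral_sub hA.measurableSet hAb x₀ hr.le,
    Qfun_eq_setIntegral_sub hA'.measurableSet hA'b x₀ hr.le,
    setIntegral_norm_sub_sq_sub hAb, setIntegral_norm_sub_sq_sub hA'b, hmass, hmom, hang]

/-- If nonempty bounded open sets `A, A' ⊆ ℝ²` have equal mass,
momentum, and angular momentum, then `Q(A; B_r(x₀)) = Q(A'; B_r(x₀))` for every
`x₀ ∈ ℝ²` and every `r > 0`. -/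
theorem stmt11 (A A' : Set Plane) (hA : IsOpen A) (hAb : Bornology.IsBounded A)
    (hAne : A.Nonempty) (hA' : IsOpen A') (hA'b : Bornology.IsBounded A')
    (hA'ne : A'.Nonempty) (hmass : mass A = mass A') (hmom : mom A = mom A')
    (hang : angMom A = angMom A') :
    ∀ (x₀ : Plane) (r : ℝ), 0 < r → Qfun A x₀ r = Qfun A' x₀ r :=
  stmt11_general A A' hA hAb hA' hA'b hmass hmom hang
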